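/- arXiv:1808.03391 — 4 statements merged into one kernel-verified Lean document; each statement's English description precedes it below -/
import Mathlib

section
/- Let G be a (claw, co-claw)-free graph. If G contains a triangle and an independent set of size 3 that are vertex-disjoint, then G contains an induced net or an induced 3-sun. -/
open SimpleGraph

/-- `H` occurs as an induced subgraph of `G`. -/
def HasInducedCopy {V W : Type*} (G : SimpleGraph V) (H : SimpleGraph W) : Prop :=
  ∃ f : W ↪ V, ∀ a b, H.Adj a b ↔ G.Adj (f a) (f b)

/-- The graph on `Fin n` with the given edge list. -/
def listGraph (n : ℕ) (l : List (Fin n × Fin n)) : SimpleGraph (Fin n) :=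
  SimpleGraph.fromRel (fun a b => (a, b) ∈ l)

/-- The claw `K_{1,3}`. -/
def clawGraph : SimpleGraph (Fin 4) := listGraph 4 [(0,1),(0,2),(0,3)]

/-- The co-claw: the complement of the claw (a triangle plus an isolated vertex). -/
def coclawGraph : SimpleGraph (Fin 4) := clawGraphᶜ

/-- The net: a triangle `0,1,2` with pendant vertices `3,4,5`, where `3+i` is
adjacent exactly to `i`. -/
def netGraph : SimpleGraph (Fin 6) := listGraph 6 [(0,1),(0,2),(1,2),(0,3),(1,4),(2,5)]

/-- The 3-sun: the complement of the net. -/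
def sunGraph : SimpleGraph (Fin 6) := netGraphᶜ

/-- The bull: a triangle `0,1,2` with pendant vertices `3` (adjacent to `0`)
and `4` (adjacent to `1`). -/
def bullGraph : SimpleGraph (Fin 5) := listGraph 5 [(0,1),(0,2),(1,2),(0,3),(1,4)]

/-- `{a, b, c}` is an asteroidal triple of `G`: an independent set of three
vertices such that any two of them are joined by a path avoiding the closed
neighbourhood of the third. -/
def IsAT {V : Type*} (G : SimpleGraph V) (a b c : V) : Prop :=
  a ≠ b ∧ a ≠ c ∧ b ≠ c ∧ ¬G.Adj a b ∧ ¬G.Adj a c ∧ ¬G.Adj b c ∧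
  (∃ p : G.Walk a b, ∀ x ∈ p.support, x ≠ c ∧ ¬G.Adj c x) ∧
  (∃ p : G.Walk a c, ∀ x ∈ p.support, x ≠ b ∧ ¬G.Adj b x) ∧
  (∃ p : G.Walk b c, ∀ x ∈ p.support, x ≠ a ∧ ¬G.Adj a x)

/-- A graph is AT-free if it contains no asteroidal triple. -/
def ATFree {V : Type*} (G : SimpleGraph V) : Prop := ∀ a b c : V, ¬ IsAT G a b c

/-- A unit interval graph: vertices are unit intervals `[f v, f v + 1]` on the
real line, and distinct vertices are adjacent iff their intervals intersect. -/
def IsUnitIntervalGraph {V : Type*} (G : SimpleGraph V) : Prop :=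
  ∃ f : V → ℝ, ∀ u v : V, G.Adj u v ↔ u ≠ v ∧ |f u - f v| ≤ 1

/-! Write the triangle as `t` and the independent triple as `s`. Claw- and co-claw-freeness
constrain the 3 × 3 adjacency matrix between them so much that, by a finite check, it is the
matrix of a permutation or its complement. In the first case the triangle with its private
neighbours is a net; in the second the same holds in the complement graph, which is a 3-sun
in `G`. -/

instance (n : ℕ) (l : List (Fin n × Fin n)) : DecidableRel (listGraph n l).Adj :=
  fun u v => decidable_of_iff _ (fromRel_adj _ u v).symm

instance : DecidableRel netGraph.Adj := inferInstanceAs (DecidableRel (listGraph 6 _).Adj)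

section

variable {V W : Type*} {G : SimpleGraph V}

theorem HasInducedCopy.of_compl {H : SimpleGraph W} (h : HasInducedCopy Gᶜ H) :
    HasInducedCopy G Hᶜ := by
  obtain ⟨f, hf⟩ := h
  refine ⟨f, fun a b => ?_⟩
  rw [compl_adj, hf, compl_adj, f.injective.ne_iff]
  exact ⟨fun h => by_contra fun hn => h.2 ⟨h.1, hn⟩,
    fun h => ⟨G.ne_of_adj h ∘ congrArg f, fun h' => h'.2 h⟩⟩

theorem hasInducedCopy_claw {x₀ x₁ x₂ x₃ : V}
    (h₁ : G.Adj x₀ x₁) (h₂ : G.Adj x₀ x₂) (h₃ : G.Adj x₀ x₃)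
    (h₁₂ : ¬G.Adj x₁ x₂) (h₁₃ : ¬G.Adj x₁ x₃) (h₂₃ : ¬G.Adj x₂ x₃)
    (d₁₂ : x₁ ≠ x₂) (d₁₃ : x₁ ≠ x₃) (d₂₃ : x₂ ≠ x₃) :
    HasInducedCopy G clawGraph := by
  have hinj : Function.Injective ![x₀, x₁, x₂, x₃] := by
    have := h₁.ne; have := h₂.ne; have := h₃.ne
    intro a b hab
    fin_cases a <;> fin_cases b <;> simp_all [eq_comm]
  refine ⟨⟨_, hinj⟩, fun a b => ?_⟩
  simp only [Function.Embedding.coeFn_mk]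
  fin_cases a <;> fin_cases b <;> simp [clawGraph, listGraph, G.adj_comm, *]

theorem hasInducedCopy_coclaw {x₀ x₁ x₂ x₃ : V}
    (h₁₂ : G.Adj x₁ x₂) (h₁₃ : G.Adj x₁ x₃) (h₂₃ : G.Adj x₂ x₃)
    (h₁ : ¬G.Adj x₀ x₁) (h₂ : ¬G.Adj x₀ x₂) (h₃ : ¬G.Adj x₀ x₃)
    (d₁ : x₀ ≠ x₁) (d₂ : x₀ ≠ x₂) (d₃ : x₀ ≠ x₃) :
    HasInducedCopy G coclawGraph :=
  HasInducedCopy.of_compl <| hasInducedCopy_claw (G := Gᶜ) ⟨d₁, h₁⟩ ⟨d₂, h₂⟩ ⟨d₃, h₃⟩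
    (by simp [h₁₂]) (by simp [h₁₃]) (by simp [h₂₃]) h₁₂.ne h₁₃.ne h₂₃.ne

theorem injective_of_adj_iff {H : SimpleGraph W}
    (hH : ∀ a b, (∀ c, H.Adj a c ↔ H.Adj b c) → a = b) {f : W → V}
    (hf : ∀ a b, H.Adj a b ↔ G.Adj (f a) (f b)) : Function.Injective f :=
  fun a b hab => hH a b fun c => by rw [hf, hf, hab]

theorem hasInducedCopy_net {t x : Fin 3 → V} (ht : ∀ i j, G.Adj (t i) (t j) ↔ i ≠ j)
    (hx : ∀ i j, ¬G.Adj (x i) (x j)) (hxt : ∀ i j, G.Adj (x i) (t j) ↔ i = j) :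
    HasInducedCopy G netGraph := by
  have hadj : ∀ a b, netGraph.Adj a b ↔ G.Adj (Fin.append t x a) (Fin.append t x b) := by
    refine Fin.addCases (m := 3) (n := 3) (fun i => ?_) (fun i => ?_) <;>
      refine Fin.addCases (m := 3) (n := 3) (fun j => ?_) (fun j => ?_) <;>
      simp only [Fin.append_left, Fin.append_right, ht, hx, hxt, G.adj_comm (t _) (x _)] <;>
      decide +revert
  exact ⟨⟨_, injective_of_adj_iff (by decide) hadj⟩, hadj⟩

theorem hasInducedCopy_sun {t x : Fin 3 → V} (ht : ∀ i j, G.Adj (t i) (t j) ↔ i ≠ j)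
    (hx : ∀ i j, ¬G.Adj (x i) (x j)) (hx_inj : Function.Injective x)
    (hxt : ∀ i j, G.Adj (x i) (t j) ↔ i ≠ j) :
    HasInducedCopy G sunGraph := by
  refine HasInducedCopy.of_compl (hasInducedCopy_net (t := x) (x := t) ?_ ?_ ?_)
  · intro i j
    simp [hx, hx_inj.ne_iff]
  · intro i j
    by_cases hij : i = j <;> simp [hij, ht]
  · have hne : ∀ i, t i ≠ x i := fun i h =>
      hx (i + 1) i (h ▸ (hxt _ _).2 (by simp))
    intro i j
    rw [compl_adj, G.adj_comm, hxt]
    by_cases hij : i = j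
    · subst hij; simp [hne]
    · simp [hij, Ne.symm hij]

end

/-- Rows index an independent triple and columns a triangle, `R` is their adjacency. The first
and last conditions exclude co-claws, the middle two claws centred in the triangle. -/
def IsClawCoclawPattern (R : Fin 3 → Fin 3 → Bool) : Prop :=
  (∀ i, ∃ j, R i j) ∧ (∀ j, ∃ i, ¬R i j) ∧
  (∀ i i' j j', i ≠ i' → j ≠ j' → R i j → R i' j → R i j' ∨ R i' j') ∧
  (∀ i i' j j', i ≠ i' → j ≠ j' → R i j → R i j' → R i' j ∨ R i' j')

set_option synthInstance.maxSize 256 in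
set_option maxRecDepth 4000 in
theorem IsClawCoclawPattern.exists_perm {R : Fin 3 → Fin 3 → Bool}
    (hR : IsClawCoclawPattern R) :
    ∃ σ : Equiv.Perm (Fin 3), (∀ i j, R i j ↔ σ i = j) ∨ (∀ i j, R i j ↔ σ i ≠ j) := by
  revert R
  unfold IsClawCoclawPattern
  decide

section

variable {V : Type*} {G : SimpleGraph V}

theorem isClawCoclawPattern_adj [DecidableRel G.Adj]
    (hclaw : ¬HasInducedCopy G clawGraph) (hcoclaw : ¬HasInducedCopy G coclawGraph)
    {t s : Fin 3 → V} (ht : ∀ i j, G.Adj (t i) (t j) ↔ i ≠ j)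
    (hs : ∀ i j, ¬G.Adj (s i) (s j)) (hs_inj : Function.Injective s)
    (hst : ∀ i j, s i ≠ t j) :
    IsClawCoclawPattern fun i j => G.Adj (s i) (t j) := by
  have htt : ∀ {i j}, i ≠ j → G.Adj (t i) (t j) := (ht _ _).2
  simp only [IsClawCoclawPattern, decide_eq_true_eq]
  refine ⟨fun i => ?_, fun j => ?_, fun i i' j j' hi hj hij hi'j => ?_,
    fun i i' j j' hi hj hij hij' => ?_⟩ <;> by_contra! h
  · exact hcoclaw (hasInducedCopy_coclaw (htt (by decide : (0 : Fin 3) ≠ 1))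
      (htt (by decide : (0 : Fin 3) ≠ 2)) (htt (by decide : (1 : Fin 3) ≠ 2))
      (h 0) (h 1) (h 2) (hst i 0) (hst i 1) (hst i 2))
  · exact hclaw (hasInducedCopy_claw (h 0).symm (h 1).symm (h 2).symm (hs 0 1) (hs 0 2) (hs 1 2)
      (hs_inj.ne (by decide)) (hs_inj.ne (by decide)) (hs_inj.ne (by decide)))
  · exact hclaw (hasInducedCopy_claw hij.symm hi'j.symm (htt hj) (hs i i') h.1 h.2
      (hs_inj.ne hi) (hst i j') (hst i' j'))
  · exact hcoclaw (hasInducedCopy_coclaw hij hij' (htt hj) (hs i' i) h.1 h.2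
      (hs_inj.ne hi.symm) (hst i' j) (hst i' j'))

theorem hasInducedCopy_net_or_sun_of_triangle_of_independent
    (hclaw : ¬HasInducedCopy G clawGraph) (hcoclaw : ¬HasInducedCopy G coclawGraph)
    {t s : Fin 3 → V} (ht : ∀ i j, G.Adj (t i) (t j) ↔ i ≠ j)
    (hs : ∀ i j, ¬G.Adj (s i) (s j)) (hs_inj : Function.Injective s)
    (hst : ∀ i j, s i ≠ t j) :
    HasInducedCopy G netGraph ∨ HasInducedCopy G sunGraph := by
  classical
  obtain ⟨σ, hσ | hσ⟩ := (isClawCoclawPattern_adj hclaw hcoclaw ht hs hs_inj hst).exists_perm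
  all_goals simp only [decide_eq_true_eq] at hσ
  · refine .inl (hasInducedCopy_net (x := fun i => s (σ.symm i)) ht (fun _ _ => hs _ _)
      fun i j => ?_)
    rw [hσ, Equiv.apply_symm_apply]
  · refine .inr (hasInducedCopy_sun (x := fun i => s (σ.symm i)) ht (fun _ _ => hs _ _)
      (hs_inj.comp σ.symm.injective) fun i j => ?_)
    rw [hσ, Equiv.apply_symm_apply]

end

/-- If a (claw, co-claw)-free graph contains a triangle and an independent set
of size 3 that are vertex-disjoint, then it contains an induced net or an
induced 3-sun. -/
theorem claw_coclaw_net_or_sun {V : Type*} (G : SimpleGraph V)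
    (hclaw : ¬ HasInducedCopy G clawGraph)
    (hcoclaw : ¬ HasInducedCopy G coclawGraph)
    (a b c s₁ s₂ s₃ : V)
    (hab : G.Adj a b) (hac : G.Adj a c) (hbc : G.Adj b c)
    (hs12 : s₁ ≠ s₂) (hs13 : s₁ ≠ s₃) (hs23 : s₂ ≠ s₃)
    (hn12 : ¬G.Adj s₁ s₂) (hn13 : ¬G.Adj s₁ s₃) (hn23 : ¬G.Adj s₂ s₃)
    (hdisj : ∀ s ∈ ({s₁, s₂, s₃} : Set V), s ≠ a ∧ s ≠ b ∧ s ≠ c) :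
    HasInducedCopy G netGraph ∨ HasInducedCopy G sunGraph := by
  obtain ⟨h1a, h1b, h1c⟩ := hdisj s₁ (by simp)
  obtain ⟨h2a, h2b, h2c⟩ := hdisj s₂ (by simp)
  obtain ⟨h3a, h3b, h3c⟩ := hdisj s₃ (by simp)
  refine hasInducedCopy_net_or_sun_of_triangle_of_independent hclaw hcoclaw
    (t := ![a, b, c]) (s := ![s₁, s₂, s₃]) (fun i j => ?_) (fun i j => ?_) (fun i j h => ?_)
    (fun i j => ?_) <;> fin_cases i <;> fin_cases j
  all_goals simp_all [G.adj_comm, eq_comm]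
end

section
/- Let G be a (claw, co-claw)-free graph. If G contains an induced net, then G is itself isomorphic to the net. -/
open SimpleGraph

/-!
A vertex `v` outside an induced net is adjacent to every pendant vertex: if `v` missed the
pendant `s` of the triangle vertex `c`, then `v`'s adjacencies to the triangle and to the
other two pendants always produce a claw or a co-claw together with `s`. By the rotational
symmetry of the net this holds for all three pendants, and then `v` and the three pairwise
non-adjacent pendants form a claw. So the induced net is all of `G`.
-/

instance inst_s9 : DecidableRel netGraph.Adj := by unfold netGraph listGraph; infer_instance

def netGraphRotation : netGraph ≃g netGraph where
  toFun := ![1, 2, 0, 4, 5, 3]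
  invFun := ![2, 0, 1, 5, 3, 4]
  left_inv i := by fin_cases i <;> rfl
  right_inv i := by fin_cases i <;> rfl
  map_rel_iff' := by decide

section

variable {V : Type*} {G : SimpleGraph V}

theorem hasInducedCopy_iff_nonempty_embedding {W : Type*} {H : SimpleGraph W} :
    HasInducedCopy G H ↔ Nonempty (H ↪g G) :=
  ⟨fun ⟨f, hf⟩ => ⟨⟨f, (hf _ _).symm⟩⟩,
    fun ⟨φ⟩ => ⟨φ.toEmbedding, fun _ _ => φ.map_adj_iff.symm⟩⟩

theorem hasInducedCopy_clawGraph {a b c d : V}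
    (hab : G.Adj a b) (hac : G.Adj a c) (had : G.Adj a d)
    (hbc : b ≠ c) (hbd : b ≠ d) (hcd : c ≠ d)
    (nbc : ¬G.Adj b c) (nbd : ¬G.Adj b d) (ncd : ¬G.Adj c d) :
    HasInducedCopy G clawGraph := by
  have := hab.ne; have := hac.ne; have := had.ne
  refine ⟨⟨![a, b, c, d], fun i j h => ?_⟩, fun i j => ?_⟩
  · fin_cases i <;> fin_cases j <;> simp_all
  · change clawGraph.Adj i j ↔ G.Adj (![a, b, c, d] i) (![a, b, c, d] j)
    fin_cases i <;> fin_cases j <;> simp [clawGraph, listGraph, G.adj_comm, *]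

theorem hasInducedCopy_coclawGraph {a b c d : V}
    (hab : G.Adj a b) (hac : G.Adj a c) (hbc : G.Adj b c)
    (had : a ≠ d) (hbd : b ≠ d) (hcd : c ≠ d)
    (nad : ¬G.Adj a d) (nbd : ¬G.Adj b d) (ncd : ¬G.Adj c d) :
    HasInducedCopy G coclawGraph := by
  have := hab.ne; have := hac.ne; have := hbc.ne
  refine ⟨⟨![d, a, b, c], fun i j h => ?_⟩, fun i j => ?_⟩
  · fin_cases i <;> fin_cases j <;> simp_all
  · change coclawGraph.Adj i j ↔ G.Adj (![d, a, b, c] i) (![d, a, b, c] j)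
    fin_cases i <;> fin_cases j <;>
      simp [coclawGraph, clawGraph, listGraph, G.adj_comm, *]

theorem adj_netGraph_pendant_of_forall_ne (hclaw : ¬HasInducedCopy G clawGraph)
    (hcoclaw : ¬HasInducedCopy G coclawGraph) (φ : netGraph ↪g G) {v : V}
    (hvφ : ∀ i, v ≠ φ i) : G.Adj v (φ 5) := by
  by_contra h5
  have h01 : ¬(G.Adj v (φ 0) ∧ G.Adj v (φ 1)) := by
    rintro ⟨h0, h1⟩
    refine hcoclaw (hasInducedCopy_coclawGraph (d := φ 5) h0 h1 ?_ ?_ ?_ ?_ h5 ?_ ?_) <;>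
      simp +decide [hvφ]
  have h2 : ¬G.Adj v (φ 2) := by
    intro h2
    refine h01 ⟨?_, ?_⟩ <;> by_contra h
    · refine hclaw (hasInducedCopy_clawGraph (c := φ 5) (d := φ 0) h2.symm
        ?_ ?_ ?_ ?_ ?_ h5 h ?_) <;>
        simp +decide [hvφ]
    · refine hclaw (hasInducedCopy_clawGraph (c := φ 5) (d := φ 1) h2.symm
        ?_ ?_ ?_ ?_ ?_ h5 h ?_) <;>
        simp +decide [hvφ]
  have h0 : ¬G.Adj v (φ 0) := by
    intro h0
    by_cases h3 : G.Adj v (φ 3)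
    · refine hcoclaw (hasInducedCopy_coclawGraph (d := φ 5) h0 h3 ?_ ?_ ?_ ?_ h5 ?_ ?_) <;>
        simp +decide [hvφ]
    · refine hclaw (hasInducedCopy_clawGraph (c := φ 3) (d := φ 1) h0.symm ?_ ?_ ?_ ?_ ?_ h3
        (fun h1 => h01 ⟨h0, h1⟩) ?_) <;> simp +decide [hvφ]
  have h1 : ¬G.Adj v (φ 1) := by
    intro h1
    by_cases h4 : G.Adj v (φ 4)
    · refine hcoclaw (hasInducedCopy_coclawGraph (d := φ 5) h1 h4 ?_ ?_ ?_ ?_ h5 ?_ ?_) <;>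
        simp +decide [hvφ]
    · refine hclaw (hasInducedCopy_clawGraph (c := φ 4) (d := φ 0) h1.symm
        ?_ ?_ ?_ ?_ ?_ h4 h0 ?_) <;>
        simp +decide [hvφ]
  refine hcoclaw (hasInducedCopy_coclawGraph (a := φ 0) (b := φ 1) (c := φ 2) ?_ ?_ ?_
    (hvφ 0).symm (hvφ 1).symm (hvφ 2).symm (h0 ·.symm) (h1 ·.symm) (h2 ·.symm)) <;>
    simp +decide

end

/-- A (claw, co-claw)-free graph containing an induced net is itself
isomorphic to the net. -/
theorem claw_coclaw_net_is_net {V : Type*} (G : SimpleGraph V)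
    (hclaw : ¬ HasInducedCopy G clawGraph)
    (hcoclaw : ¬ HasInducedCopy G coclawGraph)
    (hnet : HasInducedCopy G netGraph) :
    Nonempty (G ≃g netGraph) := by
  obtain ⟨φ⟩ := hasInducedCopy_iff_nonempty_embedding.1 hnet
  have hsurj : Function.Surjective φ := by
    intro v
    by_contra hv
    have hvφ : ∀ i, v ≠ φ i := fun i h => hv ⟨i, h.symm⟩
    have pendant (ψ : netGraph ≃g netGraph) : G.Adj v (φ (ψ 5)) :=
      adj_netGraph_pendant_of_forall_ne hclaw hcoclaw (ψ.toEmbedding.trans φ) (hvφ <| ψ ·)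
    refine hclaw (hasInducedCopy_clawGraph (b := φ 3) (c := φ 4) (d := φ 5)
      (pendant netGraphRotation) (pendant (netGraphRotation.trans netGraphRotation))
      (pendant (RelIso.refl _)) ?_ ?_ ?_ ?_ ?_ ?_) <;> simp +decide
  exact ⟨(RelIso.ofSurjective φ hsurj).symm⟩
end

section
/- Let G be a (claw, co-claw)-free graph containing a triangle T and an independent set C of size 3 that share exactly one vertex. Then T ∪ C induces a bull in G. -/
open SimpleGraph

/-! Two non-adjacent vertices `s, t` outside the triangle `abc`, both non-adjacent to `a`, must
each see `b` or `c` (else a co-claw), and cannot share a neighbour in the triangle (else a claw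
with leaves `a, s, t`). So one of them sees only `b` and the other only `c`: a bull. -/

def HasInducedBullOn {V : Type*} (G : SimpleGraph V) (S : Set V) : Prop :=
  ∃ f : Fin 5 ↪ V, (∀ u v, bullGraph.Adj u v ↔ G.Adj (f u) (f v)) ∧ Set.range f = S

namespace SimpleGraph

variable {V : Type*} {G : SimpleGraph V}

lemma hasInducedCopy_clawGraph {x p q r : V} (hxp : G.Adj x p) (hxq : G.Adj x q)
    (hxr : G.Adj x r) (hpq : ¬G.Adj p q) (hpr : ¬G.Adj p r) (hqr : ¬G.Adj q r)
    (hpq' : p ≠ q) (hpr' : p ≠ r) (hqr' : q ≠ r) :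
    HasInducedCopy G clawGraph := by
  refine ⟨⟨![x, p, q, r], ?_⟩, ?_⟩
  · intro i j h
    fin_cases i <;> fin_cases j <;> simp_all [hxp.ne, hxq.ne, hxr.ne, eq_comm]
  · intro i j
    change _ ↔ G.Adj (![x, p, q, r] i) (![x, p, q, r] j)
    fin_cases i <;> fin_cases j <;>
      simp [clawGraph, listGraph, hxp, hxq, hxr, hpq, hpr, hqr, hxp.symm, hxq.symm, hxr.symm,
        G.adj_comm]

lemma hasInducedCopy_coclawGraph {w x y z : V} (hxy : G.Adj x y) (hxz : G.Adj x z)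
    (hyz : G.Adj y z) (hwx : ¬G.Adj w x) (hwy : ¬G.Adj w y) (hwz : ¬G.Adj w z) :
    HasInducedCopy G coclawGraph := by
  have hwx' : w ≠ x := by rintro rfl; exact hwy hxy
  have hwy' : w ≠ y := by rintro rfl; exact hwz hyz
  have hwz' : w ≠ z := by rintro rfl; exact hwx hxz.symm
  refine ⟨⟨![w, x, y, z], ?_⟩, ?_⟩
  · intro i j h
    fin_cases i <;> fin_cases j <;> simp_all [hxy.ne, hxz.ne, hyz.ne, eq_comm]
  · intro i j
    change _ ↔ G.Adj (![w, x, y, z] i) (![w, x, y, z] j)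
    fin_cases i <;> fin_cases j <;>
      simp [coclawGraph, clawGraph, listGraph, hxy, hxz, hyz, hwx, hwy, hwz,
        hxy.symm, hxz.symm, hyz.symm, G.adj_comm]

lemma hasInducedBullOn_of_adj {x y z u v : V} (hxy : G.Adj x y) (hxz : G.Adj x z)
    (hyz : G.Adj y z) (hxu : G.Adj x u) (hyv : G.Adj y v) (hzu : ¬G.Adj z u)
    (hzv : ¬G.Adj z v) (hyu : ¬G.Adj y u) (hxv : ¬G.Adj x v) (huv : ¬G.Adj u v) :
    HasInducedBullOn G {x, y, z, u, v} := by
  have hzu' : z ≠ u := by rintro rfl; exact hyu hyz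
  have hzv' : z ≠ v := by rintro rfl; exact hxv hxz
  have hyu' : y ≠ u := by rintro rfl; exact hzu hyz.symm
  have hxv' : x ≠ v := by rintro rfl; exact hzv hxz.symm
  have huv' : u ≠ v := by rintro rfl; exact hxv hxu
  refine ⟨⟨![x, y, z, u, v], ?_⟩, ?_, ?_⟩
  · intro i j h
    fin_cases i <;> fin_cases j <;>
      simp_all [hxy.ne, hxz.ne, hyz.ne, hxu.ne, hyv.ne, eq_comm]
  · intro i j
    change _ ↔ G.Adj (![x, y, z, u, v] i) (![x, y, z, u, v] j)
    fin_cases i <;> fin_cases j <;>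
      simp [bullGraph, listGraph, hxy, hxz, hyz, hxu, hyv, hzu, hzv, hyu, hxv, huv,
        hxy.symm, hxz.symm, hyz.symm, hxu.symm, hyv.symm, G.adj_comm]
  · ext w
    simp [Fin.exists_fin_succ]
    tauto

lemma adj_or_adj_of_not_hasInducedCopy_coclawGraph
    (hcoclaw : ¬HasInducedCopy G coclawGraph) {a b c s : V}
    (hab : G.Adj a b) (hac : G.Adj a c) (hbc : G.Adj b c) (hsa : ¬G.Adj s a) :
    G.Adj s b ∨ G.Adj s c := by
  by_contra! h
  exact hcoclaw (hasInducedCopy_coclawGraph hab hac hbc hsa h.1 h.2)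

lemma not_adj_of_not_hasInducedCopy_clawGraph
    (hclaw : ¬HasInducedCopy G clawGraph) {a x s t : V} (hax : G.Adj a x)
    (has : a ≠ s) (hat : a ≠ t) (hst : s ≠ t)
    (hnas : ¬G.Adj a s) (hnat : ¬G.Adj a t) (hnst : ¬G.Adj s t) (hsx : G.Adj s x) :
    ¬G.Adj t x := fun htx =>
  hclaw (hasInducedCopy_clawGraph hax.symm hsx.symm htx.symm hnas hnat hnst has hat hst)

lemma hasInducedBullOn_of_adj_of_not_hasInducedCopy
    (hclaw : ¬HasInducedCopy G clawGraph) (hcoclaw : ¬HasInducedCopy G coclawGraph)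
    {a b c s t : V} (hab : G.Adj a b) (hac : G.Adj a c) (hbc : G.Adj b c)
    (has : a ≠ s) (hat : a ≠ t) (hst : s ≠ t)
    (hnas : ¬G.Adj a s) (hnat : ¬G.Adj a t) (hnst : ¬G.Adj s t) (hsb : G.Adj s b) :
    HasInducedBullOn G {a, b, c, s, t} := by
  have htb : ¬G.Adj t b :=
    not_adj_of_not_hasInducedCopy_clawGraph hclaw hab has hat hst hnas hnat hnst hsb
  have htc : G.Adj t c :=
    (adj_or_adj_of_not_hasInducedCopy_coclawGraph hcoclaw hab hac hbc
      (mt G.adj_symm hnat)).resolve_left htb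
  have hsc : ¬G.Adj s c :=
    not_adj_of_not_hasInducedCopy_clawGraph hclaw hac hat has hst.symm hnat hnas
      (mt G.adj_symm hnst) htc
  have hbull := hasInducedBullOn_of_adj hbc hab.symm hac.symm hsb.symm htc.symm
    hnas hnat (mt G.adj_symm hsc) (mt G.adj_symm htb) hnst
  rwa [Set.insert_comm c a, Set.insert_comm b a] at hbull

end SimpleGraph

theorem triangle_cotriangle_bull_general {V : Type*} (G : SimpleGraph V)
    (hclaw : ¬ HasInducedCopy G clawGraph)
    (hcoclaw : ¬ HasInducedCopy G coclawGraph)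
    (a b c s t : V)
    (hab : G.Adj a b) (hac : G.Adj a c) (hbc : G.Adj b c)
    (has : a ≠ s) (hat : a ≠ t) (hst : s ≠ t)
    (hnas : ¬G.Adj a s) (hnat : ¬G.Adj a t) (hnst : ¬G.Adj s t) :
    ∃ f : Fin 5 ↪ V, (∀ u v, bullGraph.Adj u v ↔ G.Adj (f u) (f v)) ∧
      Set.range f = {a, b, c, s, t} := by
  rcases adj_or_adj_of_not_hasInducedCopy_coclawGraph hcoclaw hab hac hbc
      (mt G.adj_symm hnas) with hsb | hsc
  · exact hasInducedBullOn_of_adj_of_not_hasInducedCopy hclaw hcoclaw hab hac hbc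
      has hat hst hnas hnat hnst hsb
  · have hbull := hasInducedBullOn_of_adj_of_not_hasInducedCopy hclaw hcoclaw hac hab hbc.symm
      has hat hst hnas hnat hnst hsc
    rwa [Set.insert_comm c b] at hbull

/-- In a (claw, co-claw)-free graph, a triangle `T = {a,b,c}` and an
independent set `C = {a,s,t}` of size 3 sharing exactly the vertex `a`
together induce a bull. -/
theorem triangle_cotriangle_bull {V : Type*} (G : SimpleGraph V)
    (hclaw : ¬ HasInducedCopy G clawGraph)
    (hcoclaw : ¬ HasInducedCopy G coclawGraph)
    (a b c s t : V)
    (hab : G.Adj a b) (hac : G.Adj a c) (hbc : G.Adj b c)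
    (has : a ≠ s) (hat : a ≠ t) (hst : s ≠ t)
    (hnas : ¬G.Adj a s) (hnat : ¬G.Adj a t) (hnst : ¬G.Adj s t)
    (hsb : s ≠ b) (hsc : s ≠ c) (htb : t ≠ b) (htc : t ≠ c) :
    ∃ f : Fin 5 ↪ V, (∀ u v, bullGraph.Adj u v ↔ G.Adj (f u) (f v)) ∧
      Set.range f = {a, b, c, s, t} :=
  triangle_cotriangle_bull_general G hclaw hcoclaw a b c s t hab hac hbc has hat hst hnas hnat hnst
end

section
/- If G is a connected diamond-free unit interval graph, then G is a K-chain, i.e., a sequence of complete graphs where consecutive cliques share exactly one vertex and every vertex lies in at most two maximal cliques. -/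
open SimpleGraph

/-- The diamond: `K₄` minus an edge. -/
def diamondGraph : SimpleGraph (Fin 4) := listGraph 4 [(0,1),(0,2),(0,3),(1,2),(1,3)]

/-- A `K`-chain: a sequence of complete graphs attached sequentially, with
consecutive cliques sharing exactly one vertex (and non-consecutive cliques
disjoint), so that every vertex lies in at most two of the maximal cliques. -/
def IsKChain {V : Type*} (G : SimpleGraph V) : Prop :=
  ∃ (n : ℕ) (B : Fin n → Set V),
    (∀ i, G.IsClique (B i)) ∧
    (∀ v : V, ∃ i, v ∈ B i) ∧
    (∀ u v : V, G.Adj u v → ∃ i, u ∈ B i ∧ v ∈ B i) ∧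
    (∀ i j : Fin n, (i : ℕ) + 1 = (j : ℕ) → ∃! v : V, v ∈ B i ∩ B j) ∧
    (∀ i j : Fin n, (i : ℕ) + 1 < (j : ℕ) → B i ∩ B j = ∅)

lemma diamond_embed {V : Type*} (G : SimpleGraph V) (a b c d : V)
    (nab : a ≠ b) (nac : a ≠ c) (nad : a ≠ d) (nbc : b ≠ c) (nbd : b ≠ d) (ncd : c ≠ d)
    (h01 : G.Adj a b) (h02 : G.Adj a c) (h03 : G.Adj a d)
    (h12 : G.Adj b c) (h13 : G.Adj b d) (h23 : ¬ G.Adj c d) :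
    HasInducedCopy G diamondGraph := by
  letI : DecidableRel diamondGraph.Adj := fun x y =>
    decidable_of_iff' _ (SimpleGraph.fromRel_adj _ x y)
  set t : Fin 4 → V := fun x =>
    match x with
    | 0 => a
    | 1 => b
    | 2 => c
    | 3 => d with ht
  have hinj : Function.Injective t := by
    intro x y hxy
    fin_cases x <;> fin_cases y <;>
      first
        | rfl
        | exact absurd hxy nab | exact absurd hxy nab.symm
        | exact absurd hxy nac | exact absurd hxy nac.symm
        | exact absurd hxy nad | exact absurd hxy nad.symm
        | exact absurd hxy nbc | exact absurd hxy nbc.symm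
        | exact absurd hxy nbd | exact absurd hxy nbd.symm
        | exact absurd hxy ncd | exact absurd hxy ncd.symm
  refine ⟨⟨t, hinj⟩, ?_⟩
  intro x y
  fin_cases x <;> fin_cases y <;>
    first
      | exact iff_of_false (by decide) (G.irrefl)
      | exact iff_of_true (by decide) h01
      | exact iff_of_true (by decide) h01.symm
      | exact iff_of_true (by decide) h02
      | exact iff_of_true (by decide) h02.symm
      | exact iff_of_true (by decide) h03
      | exact iff_of_true (by decide) h03.symm
      | exact iff_of_true (by decide) h12
      | exact iff_of_true (by decide) h12.symm
      | exact iff_of_true (by decide) h13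
      | exact iff_of_true (by decide) h13.symm
      | exact iff_of_false (by decide) h23
      | exact iff_of_false (by decide) (fun h => h23 h.symm)

theorem aux {V : Type*} {m : ℕ} (hm : 0 < m) (G : SimpleGraph V) (v : Fin m ≃ V)
    (F : Fin m → ℝ) (hFmono : Monotone F)
    (hadj : ∀ p q : Fin m, G.Adj (v p) (v q) ↔ p ≠ q ∧ |F p - F q| ≤ 1)
    (hconn : G.Connected)
    (hdia : ¬ HasInducedCopy G diamondGraph) : IsKChain G := by
  classical
  have adj_of : ∀ p q : Fin m, p < q → F q - F p ≤ 1 → G.Adj (v p) (v q) := by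
    intro p q hpq h
    rw [hadj]
    refine ⟨hpq.ne, ?_⟩
    have h0 : F p ≤ F q := hFmono hpq.le
    rw [abs_sub_comm, abs_of_nonneg (by linarith)]
    exact h
  have gap_of : ∀ p q : Fin m, p ≤ q → G.Adj (v p) (v q) → F q - F p ≤ 1 := by
    intro p q hpq h
    have h2 := ((hadj p q).1 h).2
    rw [abs_sub_comm] at h2
    exact le_trans (le_abs_self _) h2
  -- the reach function R
  obtain ⟨R, hRj, hRF, hRle⟩ :
      ∃ R : Fin m → Fin m, (∀ j, j ≤ R j) ∧ (∀ j, F (R j) ≤ F j + 1) ∧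
        (∀ j k, F k ≤ F j + 1 → k ≤ R j) := by
    refine ⟨fun j => (Finset.univ.filter fun k => F k ≤ F j + 1).max'
      ⟨j, by simp⟩, ?_, ?_, ?_⟩
    · intro j
      exact Finset.le_max' _ j (by simp)
    · intro j
      have := Finset.max'_mem (Finset.univ.filter fun k => F k ≤ F j + 1)
        ⟨j, by simp⟩
      simpa using this
    · intro j k hk
      exact Finset.le_max' _ k (by simpa using hk)
  have hRmono : ∀ j k : Fin m, j ≤ k → R j ≤ R k := by
    intro j k hjk
    exact hRle k (R j) (le_trans (hRF j) (by linarith [hFmono hjk]))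
  have adjR : ∀ p q : Fin m, p < q → (G.Adj (v p) (v q) ↔ q ≤ R p) := by
    intro p q hpq
    constructor
    · intro h
      exact hRle p q (by linarith [gap_of p q hpq.le h])
    · intro h
      exact adj_of p q hpq (by linarith [hFmono h, hRF p])
  -- connectivity: consecutive F-gaps are ≤ 1
  have hstep : ∀ (j : Fin m) (hj : (j : ℕ) + 1 < m), F ⟨(j : ℕ) + 1, hj⟩ - F j ≤ 1 := by
    intro j hj
    by_contra hgap
    push_neg at hgap
    have stepinv : ∀ x y : V, G.Adj x y → (v.symm x : ℕ) ≤ (j : ℕ) →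
        (v.symm y : ℕ) ≤ (j : ℕ) := by
      intro x y hxy hx
      by_contra hy
      push_neg at hy
      have h1 : F (v.symm x) ≤ F j := hFmono (by exact hx)
      have h2 : F ⟨(j : ℕ) + 1, by omega⟩ ≤ F (v.symm y) := hFmono (by exact hy)
      have hadj' : G.Adj (v (v.symm x)) (v (v.symm y)) := by simpa using hxy
      have hle : v.symm x ≤ v.symm y := by
        have : (v.symm x : ℕ) ≤ (v.symm y : ℕ) := by omega
        exact this
      have := gap_of _ _ hle hadj'
      linarith
    have key : ∀ (x y : V), G.Reachable x y → (v.symm x : ℕ) ≤ (j : ℕ) →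
        (v.symm y : ℕ) ≤ (j : ℕ) := by
      intro x y hr
      obtain ⟨w⟩ := hr
      induction w with
      | nil => exact id
      | cons h w ih => intro hx; exact ih (stepinv _ _ h hx)
    have := key (v j) (v ⟨(j : ℕ) + 1, by omega⟩) (hconn.preconnected _ _) (by simp)
    simp at this
  have hRsucc : ∀ j : Fin m, (j : ℕ) + 1 < m → j < R j := by
    intro j hj
    have h1 : (⟨(j : ℕ) + 1, by omega⟩ : Fin m) ≤ R j :=
      hRle j _ (by linarith [hstep j hj])
    have : (j : ℕ) < ((⟨(j : ℕ) + 1, by omega⟩ : Fin m) : ℕ) := by simp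
    exact lt_of_lt_of_le this h1
  have diamond : ∀ p q r s : Fin m, p < q → q < r → r < s →
      G.Adj (v p) (v r) → G.Adj (v q) (v s) → ¬ G.Adj (v p) (v s) → False := by
    intro p q r s hpq hqr hrs hpr hqs hps
    have g1 : F r - F p ≤ 1 := gap_of p r (hpq.le.trans hqr.le) hpr
    have g2 : F s - F q ≤ 1 := gap_of q s (hqr.le.trans hrs.le) hqs
    have h01 : G.Adj (v q) (v r) := adj_of q r hqr (by linarith [hFmono hpq.le])
    have h02 : G.Adj (v q) (v p) := (adj_of p q hpq (by linarith [hFmono hqr.le])).symm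
    have h12 : G.Adj (v r) (v p) := hpr.symm
    have h13 : G.Adj (v r) (v s) := adj_of r s hrs (by linarith [hFmono hqr.le])
    have hvne : ∀ x y : Fin m, x ≠ y → v x ≠ v y := fun x y h hh => h (v.injective hh)
    exact hdia (diamond_embed G (v q) (v r) (v p) (v s)
      (hvne _ _ hqr.ne) (hvne _ _ hpq.ne.symm) (hvne _ _ (hqr.trans hrs).ne)
      (hvne _ _ (hpq.trans hqr).ne.symm) (hvne _ _ hrs.ne)
      (hvne _ _ ((hpq.trans hqr).trans hrs).ne)
      h01 h02 hqs h12 h13 hps)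
  -- the last index
  have hlastlt : m - 1 < m := by omega
  have hle_last : ∀ j : Fin m, j ≤ (⟨m - 1, hlastlt⟩ : Fin m) := by
    intro j
    rw [Fin.le_def]
    exact Nat.le_pred_of_lt j.isLt
  have hRlast : R (⟨m - 1, hlastlt⟩ : Fin m) = (⟨m - 1, hlastlt⟩ : Fin m) :=
    le_antisymm (hle_last _) (hRj _)
  -- the cut sequence
  obtain ⟨a, ha0, haS⟩ : ∃ a : ℕ → Fin m, a 0 = ⟨0, hm⟩ ∧ ∀ i, a (i + 1) = R (a i) :=
    ⟨fun i => Nat.rec ⟨0, hm⟩ (fun _ p => R p) i, rfl, fun _ => rfl⟩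
  have hamono1 : ∀ i : ℕ, a i ≤ a (i + 1) := fun i => (haS i) ▸ hRj (a i)
  have hfix : ∀ i : ℕ, a i = ⟨m - 1, hlastlt⟩ → a (i + 1) = ⟨m - 1, hlastlt⟩ := by
    intro i h
    rw [haS, h, hRlast]
  have hex : ∃ i : ℕ, a i = ⟨m - 1, hlastlt⟩ := by
    suffices h : ∀ i : ℕ, i ≤ (a i : ℕ) ∨ a i = ⟨m - 1, hlastlt⟩ by
      rcases h (m - 1) with h' | h'
      · refine ⟨m - 1, le_antisymm (hle_last _) ?_⟩
        rw [Fin.le_def]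
        exact h'
      · exact ⟨m - 1, h'⟩
    intro i
    induction i with
    | zero => left; rw [ha0]
    | succ n ih =>
      rcases ih with h' | h'
      · by_cases hl : a n = ⟨m - 1, hlastlt⟩
        · right; exact hfix n hl
        · left
          have hv1 : (a n : ℕ) ≤ m - 1 := Fin.le_def.mp (hle_last (a n))
          have hv2 : (a n : ℕ) ≠ m - 1 := fun hh => hl (Fin.ext hh)
          have hlt : (a n : ℕ) + 1 < m := by omega
          have hsucc := Fin.lt_def.mp (hRsucc (a n) hlt)
          rw [haS]
          omega
      · right; exact hfix n h'
  -- number of blocks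
  set N := Nat.find hex with hNdef
  have haN : a N = ⟨m - 1, hlastlt⟩ := Nat.find_spec hex
  have hNlt : ∀ i : ℕ, i < N → a i ≠ ⟨m - 1, hlastlt⟩ := fun i hi => Nat.find_min hex hi
  by_cases hN0 : N = 0
  · -- the graph has a single vertex
    have hm1 : m = 1 := by
      have h := haN
      rw [hN0, ha0] at h
      have := congrArg Fin.val h
      simp at this
      omega
    subst hm1
    have hsub : ∀ x y : V, x = y := by
      intro x y
      have h := congrArg v (Subsingleton.elim (v.symm x) (v.symm y))
      simpa using h
    refine ⟨1, fun _ => Set.univ, ?_, ?_, ?_, ?_, ?_⟩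
    · intro i x _ y _ hxy
      exact absurd (hsub x y) hxy
    · intro x; exact ⟨0, trivial⟩
    · intro x y _; exact ⟨0, trivial, trivial⟩
    · intro i j hij
      exact absurd hij (by have := i.isLt; have := j.isLt; omega)
    · intro i j hij
      exact absurd hij (by have := i.isLt; have := j.isLt; omega)
  · -- main case
    have hNpos : 0 < N := Nat.pos_of_ne_zero hN0
    have hstrict1 : ∀ i : ℕ, i < N → a i < a (i + 1) := by
      intro i hi
      have hne := hNlt i hi
      have hv1 : (a i : ℕ) ≤ m - 1 := Fin.le_def.mp (hle_last (a i))
      have hv2 : (a i : ℕ) ≠ m - 1 := fun hh => hne (Fin.ext hh)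
      have hlt : (a i : ℕ) + 1 < m := by omega
      rw [haS]
      exact hRsucc (a i) hlt
    have hstrict : ∀ i j : ℕ, i < j → j ≤ N → a i < a j := by
      intro i j hij hjN
      induction j, hij using Nat.le_induction with
      | base => exact hstrict1 i (by omega)
      | succ n hn ih => exact lt_of_lt_of_le (ih (by omega)) (hamono1 n)
    have hcov2 : ∀ p : Fin m, p ≠ ⟨m - 1, hlastlt⟩ →
        ∃ i : ℕ, i < N ∧ a i ≤ p ∧ p < a (i + 1) := by
      intro p hp
      have hP0 : a 0 ≤ p := by
        rw [ha0, Fin.le_def]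
        exact Nat.zero_le _
      have hspec : a (Nat.findGreatest (fun i => a i ≤ p) N) ≤ p :=
        Nat.findGreatest_spec (P := fun i => a i ≤ p) (Nat.zero_le N) hP0
      have hi0le : Nat.findGreatest (fun i => a i ≤ p) N ≤ N := Nat.findGreatest_le N
      have hi0lt : Nat.findGreatest (fun i => a i ≤ p) N < N := by
        rcases eq_or_lt_of_le hi0le with h | h
        · exfalso
          rw [h, haN] at hspec
          exact hp (le_antisymm (hle_last p) hspec)
        · exact h
      have hmax : ¬ a (Nat.findGreatest (fun i => a i ≤ p) N + 1) ≤ p :=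
        Nat.findGreatest_is_greatest (P := fun i => a i ≤ p) (n := N)
          (k := Nat.findGreatest (fun i => a i ≤ p) N + 1) (by omega) (by omega)
      exact ⟨_, hi0lt, hspec, lt_of_not_ge hmax⟩
    have hedge : ∀ p q : Fin m, p < q → G.Adj (v p) (v q) →
        ∃ i : ℕ, i < N ∧ a i ≤ p ∧ q ≤ a (i + 1) := by
      intro p q hpq hAdj
      have hplast : p ≠ ⟨m - 1, hlastlt⟩ := by
        intro h
        rw [h] at hpq
        exact absurd (hle_last q) (not_le_of_gt hpq)
      obtain ⟨i, hiN, h1, h2⟩ := hcov2 p hplast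
      refine ⟨i, hiN, h1, ?_⟩
      by_contra hq
      push_neg at hq
      rcases eq_or_lt_of_le h1 with he | hlt
      · have hle : q ≤ R p := (adjR p q hpq).mp hAdj
        rw [← he, ← haS] at hle
        exact absurd hle (not_le_of_gt hq)
      · have hpr : G.Adj (v (a i)) (v (a (i + 1))) :=
          (adjR _ _ (hstrict1 i hiN)).mpr (le_of_eq (haS i))
        have hps : ¬ G.Adj (v (a i)) (v q) := by
          intro h
          have hle : q ≤ R (a i) := (adjR _ _ (lt_trans hlt hpq)).mp h
          rw [← haS] at hle
          exact absurd hle (not_le_of_gt hq)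
        exact diamond (a i) p (a (i + 1)) q hlt h2 hq hpr hAdj hps
    refine ⟨N, fun i => v '' Set.Icc (a (i : ℕ)) (a ((i : ℕ) + 1)), ?_, ?_, ?_, ?_, ?_⟩
    · -- cliques
      rintro i x ⟨p, hp, rfl⟩ y ⟨q, hq, rfl⟩ hxy
      have hne : p ≠ q := fun h => hxy (by rw [h])
      rw [hadj]
      refine ⟨hne, ?_⟩
      rw [abs_sub_le_iff]
      have e1 := hFmono hp.1
      have e2 := hFmono hp.2
      have e3 := hFmono hq.1
      have e4 := hFmono hq.2
      have e5 : F (a ((i : ℕ) + 1)) ≤ F (a (i : ℕ)) + 1 := by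
        rw [haS]
        exact hRF _
      constructor <;> linarith
    · -- vertex cover
      intro x
      obtain ⟨p, rfl⟩ : ∃ p, v p = x := ⟨v.symm x, v.apply_symm_apply x⟩
      by_cases hp : p = ⟨m - 1, hlastlt⟩
      · refine ⟨⟨N - 1, by omega⟩, p, ⟨?_, ?_⟩, rfl⟩
        · rw [hp]
          exact hle_last _
        · show p ≤ a ((N - 1) + 1)
          rw [show (N - 1) + 1 = N from by omega, haN, hp]
      · obtain ⟨i, hiN, h1, h2⟩ := hcov2 p hp
        exact ⟨⟨i, hiN⟩, p, ⟨h1, h2.le⟩, rfl⟩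
    · -- edge cover
      intro x y hxy
      obtain ⟨p, rfl⟩ : ∃ p, v p = x := ⟨v.symm x, v.apply_symm_apply x⟩
      obtain ⟨q, rfl⟩ : ∃ q, v q = y := ⟨v.symm y, v.apply_symm_apply y⟩
      have hne : p ≠ q := fun h => hxy.ne (congrArg v h)
      rcases lt_or_gt_of_ne hne with h | h
      · obtain ⟨i, hiN, h1, h2⟩ := hedge p q h hxy
        exact ⟨⟨i, hiN⟩, ⟨p, ⟨h1, le_trans h.le h2⟩, rfl⟩, ⟨q, ⟨le_trans h1 h.le, h2⟩, rfl⟩⟩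
      · obtain ⟨i, hiN, h1, h2⟩ := hedge q p h hxy.symm
        exact ⟨⟨i, hiN⟩, ⟨p, ⟨le_trans h1 h.le, h2⟩, rfl⟩, ⟨q, ⟨h1, le_trans h.le h2⟩, rfl⟩⟩
    · -- consecutive blocks
      intro i j hij
      have haij : a ((i : ℕ) + 1) = a (j : ℕ) := congrArg a hij
      refine ⟨v (a ((i : ℕ) + 1)), ⟨⟨a ((i : ℕ) + 1), ⟨hamono1 _, le_refl _⟩, rfl⟩,
        ⟨a ((i : ℕ) + 1), ⟨le_of_eq haij.symm, ?_⟩, rfl⟩⟩, ?_⟩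
      · rw [haij]
        exact hamono1 _
      · rintro x ⟨⟨p, hp, rfl⟩, ⟨q, hq, hq2⟩⟩
        have hqp : q = p := v.injective hq2
        rw [hqp] at hq
        have h1 : p ≤ a ((i : ℕ) + 1) := hp.2
        have h2 : a ((i : ℕ) + 1) ≤ p := haij ▸ hq.1
        exact congrArg v (le_antisymm h1 h2)
    · -- distant blocks
      intro i j hij
      rw [Set.eq_empty_iff_forall_notMem]
      rintro x ⟨⟨p, hp, rfl⟩, ⟨q, hq, hq2⟩⟩
      have hqp : q = p := v.injective hq2
      have hlt : a ((i : ℕ) + 1) < a (j : ℕ) := hstrict _ _ hij j.isLt.le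
      have h1 : p ≤ a ((i : ℕ) + 1) := hp.2
      have h2 : a (j : ℕ) ≤ p := hqp ▸ hq.1
      exact absurd (lt_of_le_of_lt h1 (lt_of_lt_of_le hlt h2)) (lt_irrefl p)

/-- A connected diamond-free unit interval graph is a `K`-chain. -/
theorem diamond_free_unit_interval_kchain {V : Type*} [Fintype V] (G : SimpleGraph V)
    (hconn : G.Connected)
    (hdia : ¬ HasInducedCopy G diamondGraph)
    (hunit : IsUnitIntervalGraph G) :
    IsKChain G := by
  classical
  obtain ⟨f, hf⟩ := hunit
  have hne : Nonempty V := hconn.nonempty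
  have hm : 0 < Fintype.card V := Fintype.card_pos
  set e : Fin (Fintype.card V) ≃ V := (Fintype.equivFin V).symm with he
  set σ : Equiv.Perm (Fin (Fintype.card V)) := Tuple.sort (f ∘ e) with hσ
  refine aux hm G (σ.trans e) ((f ∘ e) ∘ σ) ?_ ?_ hconn hdia
  · exact Tuple.monotone_sort (f ∘ e)
  · intro p q
    rw [hf]
    constructor
    · rintro ⟨h1, h2⟩
      exact ⟨fun h => h1 (congrArg (σ.trans e) h), h2⟩
    · rintro ⟨h1, h2⟩
      exact ⟨fun h => h1 ((σ.trans e).injective h), h2⟩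
end
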